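/- Let λ = (λ₁, λ₂) be a partition with two parts and μ = (μ₁, …, μ_ℓ) a content vector with |μ| = |λ|. Define α = (α₁, …, α_{ℓ-1}) by αᵢ = μ_{i+1} + μ_{i+2} + ⋯ + μ_ℓ, and ν = (ν₁, …, ν_ℓ) by νᵢ = αᵢ + μᵢ for i ≤ ℓ−1 and ν_ℓ = μ_ℓ. Then the Kostka number K_{λμ} equals the Littlewood-Richardson coefficient c^ν_{λα}, realized as the number of LR skew tableaux of shape λ*α and content ν. -/

import Mathlib

open Finset

/-- The two-row Young diagram with row lengths `l1` (top) and `l2` (bottom).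
In intended uses `l2 ≤ l1`. -/
def twoRow (l1 l2 : ℕ) : YoungDiagram :=
  YoungDiagram.ofRowLens [max l1 l2, l2] (by
    simp [List.sortedGE_iff_pairwise, le_max_right])

/-- The number of cells of `T` with entry `v` (entries are 0-indexed). -/
def content {sh : YoungDiagram} (T : SemistandardYoungTableau sh) (v : ℕ) : ℕ :=
  (sh.cells.filter fun c => T c.1 c.2 = v).card

/-- Kostka number: the number of semistandard Young tableaux of shape `sh`
with content `c` (entries 0-indexed: `c v` copies of entry `v`). -/
noncomputable def kostka (sh : YoungDiagram) (c : ℕ → ℕ) : ℕ :=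
  Nat.card {T : SemistandardYoungTableau sh // ∀ v, content T v = c v}

/-- A skew semistandard tableau on the skew shape whose `i`-th row occupies
columns `[lo i, lo i + len i)`: rows weakly increase, columns strictly increase,
entries vanish off the shape. -/
structure SkewTab (lo len : ℕ → ℕ) where
  entry : ℕ → ℕ → ℕ
  rowWeak : ∀ i j1 j2, lo i ≤ j1 → j1 ≤ j2 → j2 < lo i + len i → entry i j1 ≤ entry i j2
  colStrict : ∀ i j, lo i ≤ j → j < lo i + len i → lo (i + 1) ≤ j →
    j < lo (i + 1) + len (i + 1) → entry i j < entry (i + 1) j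
  zeros : ∀ i j, ¬(lo i ≤ j ∧ j < lo i + len i) → entry i j = 0

/-- The reading word: each row read right to left, rows top to bottom. -/
def readWord (lo len : ℕ → ℕ) (rows : ℕ) (T : SkewTab lo len) : List ℕ :=
  (List.range rows).flatMap fun i =>
    (List.range (len i)).reverse.map fun t => T.entry i (lo i + t)

/-- A word is a lattice word: every prefix has at least as many `v`'s as `(v+1)`'s. -/
def IsLattice (w : List ℕ) : Prop := ∀ n v, (w.take n).count (v + 1) ≤ (w.take n).count v

/-- Number of copies of `v` in row `i` of the skew tableau `T`. -/
def rowContent (lo len : ℕ → ℕ) (T : SkewTab lo len) (i v : ℕ) : ℕ :=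
  ((Finset.Ico (lo i) (lo i + len i)).filter fun j => T.entry i j = v).card

/-- Total number of copies of `v` in the skew tableau `T` (with `rows` rows). -/
def skewContent (lo len : ℕ → ℕ) (rows : ℕ) (T : SkewTab lo len) (v : ℕ) : ℕ :=
  ∑ i ∈ Finset.range rows, rowContent lo len T i v

/-- Left endpoints of the rows of the skew shape `λ*α` where `λ = (l1, l2)` and
`α` has `m` rows: the `m` rows of `α` start at column `l1`, the two rows of `λ` at column 0. -/
def starLo (l1 m : ℕ) (i : ℕ) : ℕ := if i < m then l1 else 0

/-- Row lengths of the skew shape `λ*α`, `λ = (l1, l2)`, `α` with `m` rows. -/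
def starLen (l1 l2 : ℕ) (a : ℕ → ℕ) (m : ℕ) (i : ℕ) : ℕ :=
  if i < m then a i else if i = m then l1 else if i = m + 1 then l2 else 0


/-!
In a Littlewood–Richardson tableau of shape `λ*α`, column strictness forces the entries of row `i`
of `α` to be at least `i`, and the lattice condition forces the largest of them (the first letter
read in that row) to be at most `i`; so the `α` part is the highest-weight filling, with reading
word `0^{α₀} 1^{α₁} ⋯`. What remains is a semistandard tableau of shape `λ` and content
`ν - α = μ`. Conversely, since `α i ≥ α (i+1) + μ (i+1)`, this block word followed by any word of
content `μ` is a lattice word, so every tableau of shape `λ` and content `μ` arises this way.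
-/

theorem IsLattice.of_prefix {u w : List ℕ} (h : u <+: w) (hw : IsLattice w) : IsLattice u := by
  intro n v
  rw [List.prefix_iff_eq_take.1 h, List.take_take]
  exact hw _ v

theorem IsLattice.append {u w : List ℕ} (hu : IsLattice u)
    (h : ∀ v, u.count (v + 1) + w.count (v + 1) ≤ u.count v) : IsLattice (u ++ w) := by
  intro n v
  rw [List.take_append, List.count_append, List.count_append]
  rcases le_total n u.length with hn | hn
  · simpa [Nat.sub_eq_zero_of_le hn] using hu n v
  · rw [List.take_of_length_le hn]
    have := (List.take_prefix (n - u.length) w).count_le (v + 1)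
    have := h v
    omega

theorem IsLattice.count_lt_of_append_cons {u w : List ℕ} {v : ℕ}
    (h : IsLattice (u ++ (v + 1) :: w)) : u.count (v + 1) < u.count v := by
  have := h (u.length + 1) v
  simp [List.take_length_add_append] at this
  omega

def blockWord (c : ℕ → ℕ) (m : ℕ) : List ℕ :=
  (List.range m).flatMap fun i => List.replicate (c i) i

theorem blockWord_succ (c : ℕ → ℕ) (m : ℕ) :
    blockWord c (m + 1) = blockWord c m ++ List.replicate (c m) m := by
  simp [blockWord, List.range_succ]

theorem count_blockWord (c : ℕ → ℕ) (m u : ℕ) :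
    (blockWord c m).count u = if u < m then c u else 0 := by
  induction m with
  | zero => simp [blockWord]
  | succ m ih =>
    simp only [blockWord_succ, List.count_append, ih, List.count_replicate, beq_iff_eq]
    split_ifs <;> subst_vars <;> omega

theorem isLattice_blockWord {c : ℕ → ℕ} (hc : Antitone c) (m : ℕ) :
    IsLattice (blockWord c m) := by
  induction m with
  | zero => simp [IsLattice, blockWord]
  | succ m ih =>
    rw [blockWord_succ]
    refine ih.append fun v => ?_
    simp only [count_blockWord, List.count_replicate, beq_iff_eq]
    have := hc (Nat.le_add_right v 1)
    split_ifs <;> subst_vars <;> omega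

theorem IsLattice.le_of_blockWord_append_cons {c : ℕ → ℕ} {n x : ℕ} {w : List ℕ}
    (h : IsLattice (blockWord c n ++ x :: w)) : x ≤ n := by
  obtain _ | v := x
  · exact n.zero_le
  · have := h.count_lt_of_append_cons
    rw [count_blockWord, count_blockWord] at this
    split_ifs at this <;> omega

attribute [ext] SkewTab

namespace SkewTab

variable {lo len : ℕ → ℕ}

def rowWord (S : SkewTab lo len) (i : ℕ) : List ℕ :=
  (List.range (len i)).reverse.map fun t => S.entry i (lo i + t)

theorem readWord_succ (S : SkewTab lo len) (n : ℕ) :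
    readWord lo len (n + 1) S = readWord lo len n S ++ S.rowWord n := by
  simp [readWord, rowWord, List.range_succ]

theorem readWord_prefix (S : SkewTab lo len) {n n' : ℕ} (h : n ≤ n') :
    readWord lo len n S <+: readWord lo len n' S := by
  induction h with
  | refl => exact List.prefix_rfl
  | step _ ih => exact ih.trans (by rw [readWord_succ]; exact List.prefix_append _ _)

theorem count_rowWord (S : SkewTab lo len) (i v : ℕ) :
    (S.rowWord i).count v = rowContent lo len S i v := by
  unfold rowWord rowContent
  induction len i with
  | zero => simp
  | succ k ih =>
    rw [← add_assoc, Nat.Ico_succ_right_eq_insert_Ico (by omega), Finset.filter_insert]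
    simp only [List.range_succ, List.reverse_append, List.map_append, List.count_append, ih]
    split_ifs with h
    · simp [h, Nat.add_comm 1]
    · simp [h]

theorem skewContent_eq_count_readWord (S : SkewTab lo len) (n v : ℕ) :
    skewContent lo len n S v = (readWord lo len n S).count v := by
  induction n with
  | zero => simp [skewContent, readWord]
  | succ n ih =>
    rw [skewContent, Finset.sum_range_succ, ← skewContent, ih, readWord_succ, List.count_append,
      count_rowWord]

end SkewTab

section TwoRow

variable {l1 l2 : ℕ}

theorem mem_twoRow (hl : l2 ≤ l1) {i j : ℕ} :
    (i, j) ∈ twoRow l1 l2 ↔ (i = 0 ∧ j < l1) ∨ (i = 1 ∧ j < l2) := by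
  rw [twoRow, YoungDiagram.mem_ofRowLens, max_eq_left hl]
  constructor
  · rintro ⟨hi, hj⟩
    simp only [List.length_cons, List.length_nil] at hi
    interval_cases i <;> simp_all
  · rintro (⟨rfl, hj⟩ | ⟨rfl, hj⟩) <;> simpa

theorem cells_twoRow (hl : l2 ≤ l1) :
    (twoRow l1 l2).cells =
      (range l1).map (Function.Embedding.sectR 0 ℕ) ∪
        (range l2).map (Function.Embedding.sectR 1 ℕ) := by
  ext ⟨i, j⟩
  simp [mem_twoRow hl, and_comm, eq_comm]

theorem content_twoRow (hl : l2 ≤ l1) (T : SemistandardYoungTableau (twoRow l1 l2)) (v : ℕ) :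
    content T v = #{j ∈ range l1 | T 0 j = v} + #{j ∈ range l2 | T 1 j = v} := by
  rw [content, cells_twoRow hl, filter_union, card_union_of_disjoint, filter_map, filter_map,
    card_map, card_map]
  · rfl
  · simp [disjoint_left]

end TwoRow

abbrev StarTab (l1 l2 : ℕ) (a : ℕ → ℕ) (m : ℕ) : Type :=
  SkewTab (starLo l1 m) (starLen l1 l2 a m)

section StarShape

variable {l1 l2 m : ℕ} {a : ℕ → ℕ}

theorem starCell_iff {i j : ℕ} :
    (starLo l1 m i ≤ j ∧ j < starLo l1 m i + starLen l1 l2 a m i) ↔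
      (i < m ∧ l1 ≤ j ∧ j < l1 + a i) ∨ (i = m ∧ j < l1) ∨ (i = m + 1 ∧ j < l2) := by
  unfold starLo starLen
  split_ifs <;> omega

theorem mem_twoRow_sub_iff (hl : l2 ≤ l1) {i j : ℕ} (hi : m ≤ i) :
    (i - m, j) ∈ twoRow l1 l2 ↔ (i = m ∧ j < l1) ∨ (i = m + 1 ∧ j < l2) := by
  rw [mem_twoRow hl]
  omega

end StarShape

namespace StarTab

variable {l1 l2 m : ℕ} {a : ℕ → ℕ}

def ofTwoRow (hl : l2 ≤ l1) (T : SemistandardYoungTableau (twoRow l1 l2)) :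
    StarTab l1 l2 a m where
  entry i j := if i < m then (if l1 ≤ j ∧ j < l1 + a i then i else 0) else T (i - m) j
  rowWeak i j1 j2 h1 h12 h2 := by
    have := starCell_iff.1 ⟨h1.trans h12, h2⟩
    split_ifs <;> first
      | omega
      | exact T.row_weak_of_le h12 ((mem_twoRow_sub_iff hl (by omega)).2 (by omega))
  colStrict i j h1 h2 h3 h4 := by
    have := starCell_iff.1 ⟨h1, h2⟩
    have := starCell_iff.1 ⟨h3, h4⟩
    split_ifs <;> first
      | omega
      | exact T.col_strict (by omega) ((mem_twoRow_sub_iff hl (by omega)).2 (by omega))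
  zeros i j h := by
    rw [starCell_iff] at h
    split_ifs <;> first
      | omega
      | exact T.zeros fun hm => h (by rw [mem_twoRow_sub_iff hl (by omega)] at hm; omega)

def toTwoRow (hl : l2 ≤ l1) (S : StarTab l1 l2 a m) :
    SemistandardYoungTableau (twoRow l1 l2) where
  entry r j := S.entry (m + r) j
  row_weak' {r j1 j2} h12 hm := by
    rw [mem_twoRow hl] at hm
    exact S.rowWeak _ _ _ (by unfold starLo; split_ifs <;> omega) h12.le
      (starCell_iff.2 (by omega)).2
  col_strict' {r1 r2 j} h12 hm := by
    rw [mem_twoRow hl] at hm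
    obtain ⟨rfl, rfl⟩ : r1 = 0 ∧ r2 = 1 := by omega
    exact S.colStrict m j (by simp [starLo]) (starCell_iff.2 (by omega)).2 (by simp [starLo])
      (starCell_iff.2 (by omega)).2
  zeros' {r j} hm := by
    rw [mem_twoRow hl] at hm
    exact S.zeros _ _ (by rw [starCell_iff]; omega)

@[simp]
theorem toTwoRow_apply (hl : l2 ≤ l1) (S : StarTab l1 l2 a m) (r j : ℕ) :
    S.toTwoRow hl r j = S.entry (m + r) j :=
  rfl

theorem toTwoRow_ofTwoRow (hl : l2 ≤ l1) (T : SemistandardYoungTableau (twoRow l1 l2)) :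
    (ofTwoRow (a := a) (m := m) hl T).toTwoRow hl = T := by
  ext r j
  simp [ofTwoRow]

def IsHighestOnAlpha (S : StarTab l1 l2 a m) : Prop :=
  ∀ i < m, ∀ j, l1 ≤ j → j < l1 + a i → S.entry i j = i

theorem isHighestOnAlpha_ofTwoRow (hl : l2 ≤ l1) (T : SemistandardYoungTableau (twoRow l1 l2)) :
    (ofTwoRow (a := a) (m := m) hl T).IsHighestOnAlpha := by
  intro i hi j h1 h2
  simp [ofTwoRow, hi, h1, h2]

theorem ofTwoRow_toTwoRow (hl : l2 ≤ l1) {S : StarTab l1 l2 a m} (hS : S.IsHighestOnAlpha) :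
    ofTwoRow hl (S.toTwoRow hl) = S := by
  ext i j
  simp only [ofTwoRow, toTwoRow_apply]
  split_ifs with hi hj
  · exact (hS i hi j hj.1 hj.2).symm
  · exact (S.zeros i j (by rw [starCell_iff]; omega)).symm
  · rw [Nat.add_sub_cancel' (not_lt.1 hi)]

def equivTwoRow (hl : l2 ≤ l1) :
    SemistandardYoungTableau (twoRow l1 l2) ≃ {S : StarTab l1 l2 a m // S.IsHighestOnAlpha} where
  toFun T := ⟨ofTwoRow hl T, isHighestOnAlpha_ofTwoRow hl T⟩
  invFun S := S.1.toTwoRow hl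
  left_inv := toTwoRow_ofTwoRow hl
  right_inv S := Subtype.ext (ofTwoRow_toTwoRow hl S.2)

theorem readWord_eq_blockWord {S : StarTab l1 l2 a m} {n : ℕ} (hn : n ≤ m)
    (hS : ∀ i < n, ∀ j, l1 ≤ j → j < l1 + a i → S.entry i j = i) :
    readWord (starLo l1 m) (starLen l1 l2 a m) n S = blockWord a n := by
  induction n with
  | zero => rfl
  | succ n ih =>
    rw [SkewTab.readWord_succ, blockWord_succ, ih (by omega) fun i hi => hS i (by omega)]
    congr 1
    simp only [SkewTab.rowWord, starLo, starLen, if_pos (show n < m by omega)]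
    rw [List.eq_replicate_iff]
    simp only [List.length_map, List.length_reverse, List.length_range, List.mem_map,
      List.mem_reverse, List.mem_range, true_and]
    rintro _ ⟨t, ht, rfl⟩
    exact hS n (by omega) _ (by omega) (by omega)

theorem readWord_of_isHighestOnAlpha {S : StarTab l1 l2 a m} (hS : S.IsHighestOnAlpha) :
    readWord (starLo l1 m) (starLen l1 l2 a m) (m + 2) S =
      blockWord a m ++ (S.rowWord m ++ S.rowWord (m + 1)) := by
  rw [SkewTab.readWord_succ, SkewTab.readWord_succ, readWord_eq_blockWord le_rfl hS,
    List.append_assoc]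

theorem count_rowWord_append_rowWord (hl : l2 ≤ l1) (S : StarTab l1 l2 a m) (v : ℕ) :
    (S.rowWord m ++ S.rowWord (m + 1)).count v = content (S.toTwoRow hl) v := by
  rw [List.count_append, SkewTab.count_rowWord, SkewTab.count_rowWord, content_twoRow hl]
  simp [rowContent, starLo, starLen]
  rfl

theorem isHighestOnAlpha_of_isLattice (ha : Antitone a) {S : StarTab l1 l2 a m}
    (hlat : IsLattice (readWord (starLo l1 m) (starLen l1 l2 a m) (m + 2) S)) :
    S.IsHighestOnAlpha := by
  intro i
  induction i using Nat.strong_induction_on with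
  | _ i ih =>
  intro hi j hj1 hj2
  have hcell : ∀ {r j'}, r < m → l1 ≤ j' → j' < l1 + a r →
      starLo l1 m r ≤ j' ∧ j' < starLo l1 m r + starLen l1 l2 a m r :=
    fun hr h1 h2 => starCell_iff.2 (Or.inl ⟨hr, h1, h2⟩)
  have hlower : i ≤ S.entry i j := by
    obtain _ | r := i
    · exact Nat.zero_le _
    · have hrj : j < l1 + a r := hj2.trans_le (by have := ha (Nat.le_add_right r 1); omega)
      have hr := ih r r.lt_succ_self (by omega) j hj1 hrj
      have := S.colStrict r j (hcell (by omega) hj1 hrj).1 (hcell (by omega) hj1 hrj).2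
        (hcell hi hj1 hj2).1 (hcell hi hj1 hj2).2
      omega
  obtain ⟨k, hk⟩ : ∃ k, a i = k + 1 := Nat.exists_eq_add_one.2 (by omega)
  have hlast : S.entry i j ≤ S.entry i (l1 + k) :=
    S.rowWeak i j (l1 + k) (hcell hi hj1 hj2).1 (by omega) (hcell hi (by omega) (by omega)).2
  -- Rows above `i` are already known, and row `i` is read starting from its largest entry.
  have hword : readWord (starLo l1 m) (starLen l1 l2 a m) (i + 1) S =
      blockWord a i ++ S.entry i (l1 + k) :: (S.rowWord i).tail := by
    rw [SkewTab.readWord_succ, readWord_eq_blockWord hi.le fun r hr => ih r hr (hr.trans hi)]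
    simp [SkewTab.rowWord, starLo, starLen, hi, hk, List.range_succ]
  have := (hword ▸ hlat.of_prefix (S.readWord_prefix (by omega))).le_of_blockWord_append_cons
  omega

def IsLR (ν : ℕ → ℕ) (S : StarTab l1 l2 a m) : Prop :=
  IsLattice (readWord (starLo l1 m) (starLen l1 l2 a m) (m + 2) S) ∧
    ∀ v, skewContent (starLo l1 m) (starLen l1 l2 a m) (m + 2) S v = ν v

theorem isLR_ofTwoRow_iff (hl : l2 ≤ l1) {mu ν : ℕ → ℕ} (ha0 : ∀ v, m ≤ v → a v = 0)
    (hgap : ∀ v, a (v + 1) + mu (v + 1) ≤ a v) (hν : ∀ v, ν v = a v + mu v)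
    (T : SemistandardYoungTableau (twoRow l1 l2)) :
    (ofTwoRow (a := a) (m := m) hl T).IsLR ν ↔ ∀ v, content T v = mu v := by
  have hword := readWord_of_isHighestOnAlpha (isHighestOnAlpha_ofTwoRow (a := a) (m := m) hl T)
  have hblock : ∀ v, (blockWord a m).count v = a v := fun v => by
    rw [count_blockWord]
    split_ifs with hv
    · rfl
    · exact (ha0 v (not_lt.1 hv)).symm
  have hT : ∀ v, ((ofTwoRow (a := a) (m := m) hl T).rowWord m ++
      (ofTwoRow (a := a) (m := m) hl T).rowWord (m + 1)).count v = content T v := fun v => by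
    rw [count_rowWord_append_rowWord hl, toTwoRow_ofTwoRow]
  simp only [IsLR, SkewTab.skewContent_eq_count_readWord, hword, List.count_append, hblock, hT,
    hν]
  constructor
  · exact fun h v => by have := h.2 v; omega
  · refine fun h => ⟨(isLattice_blockWord ?_ m).append fun v => ?_, fun v => by rw [h]⟩
    · exact antitone_nat_of_succ_le fun v => (Nat.le_add_right _ _).trans (hgap v)
    · rw [hblock, hblock, hT, h]
      exact hgap v

end StarTab

theorem kostka_twoRow_eq_card_isLR {l1 l2 : ℕ} (hl : l2 ≤ l1) (m : ℕ) {a mu ν : ℕ → ℕ}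
    (ha0 : ∀ v, m ≤ v → a v = 0) (hgap : ∀ v, a (v + 1) + mu (v + 1) ≤ a v)
    (hν : ∀ v, ν v = a v + mu v) :
    kostka (twoRow l1 l2) mu = Nat.card {S : StarTab l1 l2 a m // S.IsLR ν} := by
  have ha : Antitone a := antitone_nat_of_succ_le fun v => (Nat.le_add_right _ _).trans (hgap v)
  exact Nat.card_congr <|
    ((StarTab.equivTwoRow hl).subtypeEquiv fun T =>
      (StarTab.isLR_ofTwoRow_iff hl ha0 hgap hν T).symm).trans
    (Equiv.subtypeSubtypeEquivSubtype fun hS => StarTab.isHighestOnAlpha_of_isLattice ha hS.1)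

theorem sum_Ico_eq_add_sum_Ico_succ {M : Type*} [AddCommMonoid M] {f : ℕ → M} {L : ℕ}
    (hf : ∀ i, L ≤ i → f i = 0) (v : ℕ) :
    ∑ w ∈ Ico v L, f w = f v + ∑ w ∈ Ico (v + 1) L, f w := by
  rcases lt_or_ge v L with hv | hv
  · exact sum_eq_sum_Ico_succ_bot hv f
  · simp [Ico_eq_empty_of_le hv, Ico_eq_empty_of_le (hv.trans v.le_succ), hf v hv]

theorem stmt7_general (l1 l2 L : ℕ) (hl : l2 ≤ l1) (hL : 1 ≤ L) (mu : ℕ → ℕ)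
    (hmu : ∀ i, L ≤ i → mu i = 0) :
    kostka (twoRow l1 l2) mu =
      Nat.card {S : SkewTab (starLo l1 (L - 1)) (starLen l1 l2 (fun i => ∑ w ∈ Finset.Ico (i + 1) L, mu w) (L - 1)) //
        IsLattice (readWord (starLo l1 (L - 1)) (starLen l1 l2 (fun i => ∑ w ∈ Finset.Ico (i + 1) L, mu w) (L - 1)) (L + 1) S) ∧
        ∀ v, skewContent (starLo l1 (L - 1)) (starLen l1 l2 (fun i => ∑ w ∈ Finset.Ico (i + 1) L, mu w) (L - 1)) (L + 1) S v =
          ∑ w ∈ Finset.Ico v L, mu w} := by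
  have hsplit := sum_Ico_eq_add_sum_Ico_succ hmu
  rw [show L + 1 = L - 1 + 2 by omega]
  refine kostka_twoRow_eq_card_isLR hl (L - 1) (fun v hv => ?_) (fun v => ?_) (fun v => ?_)
  · simp [Ico_eq_empty_of_le (show L ≤ v + 1 by omega)]
  · rw [hsplit (v + 1), add_comm]
  · rw [hsplit v, add_comm]

/-- With `λ = (l1, l2)`, content `μ` supported on `{0, …, L-1}`,
`α i = Σ_{j > i} μ j` and `ν i = α i + μ i` (`ν` at the last index is `μ` there;
here `ν i = Σ_{j ≥ i} μ j`), the Kostka number `K_{λμ}` equals the number of LR skew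
tableaux of shape `λ*α` and content `ν`, i.e. the LR coefficient `c^ν_{λα}`. -/
theorem stmt7 (l1 l2 L : ℕ) (hl : l2 ≤ l1) (hL : 1 ≤ L) (mu : ℕ → ℕ)
    (hmu : ∀ i, L ≤ i → mu i = 0) (hsum : l1 + l2 = ∑ j ∈ Finset.range L, mu j) :
    kostka (twoRow l1 l2) mu =
      Nat.card {S : SkewTab (starLo l1 (L - 1)) (starLen l1 l2 (fun i => ∑ w ∈ Finset.Ico (i + 1) L, mu w) (L - 1)) //
        IsLattice (readWord (starLo l1 (L - 1)) (starLen l1 l2 (fun i => ∑ w ∈ Finset.Ico (i + 1) L, mu w) (L - 1)) (L + 1) S) ∧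
        ∀ v, skewContent (starLo l1 (L - 1)) (starLen l1 l2 (fun i => ∑ w ∈ Finset.Ico (i + 1) L, mu w) (L - 1)) (L + 1) S v =
          ∑ w ∈ Finset.Ico v L, mu w} :=
  stmt7_general l1 l2 L hl hL mu hmu
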